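/- arXiv:2404.03672 — 2 statements merged into one kernel-verified Lean document; each statement's English description precedes it below -/
import Mathlib

section
/- The function x ↦ -ln F(x) is strictly convex on (0, +∞). -/
/-!
`F' = exp (-x²/4) / √π` is positive and strictly decreasing on `(0, ∞)`, so `F` is positive and
strictly concave there; composing with the increasing, concave `log` keeps strict concavity.
-/

noncomputable def F (ξ : ℝ) : ℝ :=
  (1 / Real.sqrt Real.pi) * ∫ s in (0:ℝ)..ξ, Real.exp (-s ^ 2 / 4)

open Real Set

theorem StrictConcaveOn.log_comp {E : Type*} [AddCommMonoid E] [Module ℝ E] {s : Set E}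
    {f : E → ℝ} (hf : StrictConcaveOn ℝ s f) (hpos : ∀ x ∈ s, 0 < f x) :
    StrictConcaveOn ℝ s fun x => log (f x) := by
  refine ⟨hf.1, fun x hx y hy hxy a b ha hb hab => ?_⟩
  have hmid : 0 < a * f x + b * f y := by
    have := hpos x hx; have := hpos y hy; positivity
  calc a • log (f x) + b • log (f y) ≤ log (a • f x + b • f y) :=
        strictConcaveOn_log_Ioi.concaveOn.2 (hpos x hx) (hpos y hy) ha.le hb.le hab
    _ < log (f (a • x + b • y)) := log_lt_log hmid (hf.2 hx hy hxy ha hb hab)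

theorem continuous_exp_neg_sq_div_four : Continuous fun s : ℝ => exp (-s ^ 2 / 4) := by
  fun_prop

theorem hasDerivAt_F (x : ℝ) : HasDerivAt F ((1 / √π) * exp (-x ^ 2 / 4)) x :=
  (intervalIntegral.integral_hasDerivAt_right
    (continuous_exp_neg_sq_div_four.intervalIntegrable 0 x)
    (continuous_exp_neg_sq_div_four.stronglyMeasurableAtFilter _ _)
    continuous_exp_neg_sq_div_four.continuousAt).const_mul _

theorem deriv_F : deriv F = fun x => (1 / √π) * exp (-x ^ 2 / 4) :=
  funext fun x => (hasDerivAt_F x).deriv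

theorem F_zero : F 0 = 0 := by simp [F]

theorem strictMono_F : StrictMono F :=
  strictMono_of_deriv_pos fun x => by rw [deriv_F]; positivity

theorem F_pos {x : ℝ} (hx : 0 < x) : 0 < F x := F_zero ▸ strictMono_F hx

theorem strictAntiOn_deriv_F : StrictAntiOn (deriv F) (Ici 0) := by
  intro x hx y hy hxy
  simp only [deriv_F]
  have hsq : x ^ 2 < y ^ 2 := pow_lt_pow_left₀ hxy (mem_Ici.1 hx) two_ne_zero
  gcongr

theorem strictConcaveOn_F : StrictConcaveOn ℝ (Ici 0) F :=
  StrictAntiOn.strictConcaveOn_of_deriv (convex_Ici 0)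
    (fun x _ => (hasDerivAt_F x).continuousAt.continuousWithinAt)
    (by simpa only [interior_Ici] using strictAntiOn_deriv_F.mono Ioi_subset_Ici_self)

theorem strictConvexOn_neg_log_F :
    StrictConvexOn ℝ (Set.Ioi (0:ℝ)) (fun x => -Real.log (F x)) :=
  ((strictConcaveOn_F.subset Ioi_subset_Ici_self (convex_Ioi 0)).log_comp
    fun _ => F_pos).neg
end

section
/- The function x ↦ -ln(1 - F(x)) is strictly convex on all of ℝ. -/
open Real MeasureTheory Set Filter Topology

lemma setIntegral_Ioi_pos_of_pos {f : ℝ → ℝ} {a : ℝ} (hf : IntegrableOn f (Ioi a))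
    (hpos : ∀ s ∈ Ioi a, 0 < f s) : 0 < ∫ s in Ioi a, f s := by
  refine (setIntegral_pos_iff_support_of_nonneg_ae ?_ hf).2 ?_
  · exact (ae_restrict_iff' measurableSet_Ioi).2 (.of_forall fun s hs => (hpos s hs).le)
  · have hsub : Ioi a ⊆ Function.support f := fun s hs => (hpos s hs).ne'
    rw [inter_eq_right.2 hsub]
    simp

noncomputable def gaussianTail (b x : ℝ) : ℝ := ∫ s in Ioi x, exp (-b * s ^ 2)

lemma hasDerivAt_exp_neg_mul_sq (b x : ℝ) :
    HasDerivAt (fun s => exp (-b * s ^ 2)) (-2 * b * x * exp (-b * x ^ 2)) x := by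
  convert ((hasDerivAt_pow 2 x).const_mul (-b)).exp using 1
  push_cast
  ring

section
variable {b : ℝ}

lemma tendsto_exp_neg_mul_sq_atTop (hb : 0 < b) :
    Tendsto (fun s => exp (-b * s ^ 2)) atTop (𝓝 0) :=
  tendsto_exp_atBot.comp <|
    (tendsto_pow_atTop two_ne_zero).const_mul_atTop_of_neg (neg_lt_zero.2 hb)

lemma integral_Ioi_mul_exp_neg_mul_sq (hb : 0 < b) (x : ℝ) :
    ∫ s in Ioi x, s * exp (-b * s ^ 2) = exp (-b * x ^ 2) / (2 * b) := by
  have hderiv (s : ℝ) :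
      HasDerivAt (fun s => -exp (-b * s ^ 2) / (2 * b)) (s * exp (-b * s ^ 2)) s := by
    refine (((hasDerivAt_exp_neg_mul_sq b s).neg).div_const (2 * b)).congr_deriv ?_
    field_simp
  have hlim : Tendsto (fun s => -exp (-b * s ^ 2) / (2 * b)) atTop (𝓝 0) := by
    simpa using ((tendsto_exp_neg_mul_sq_atTop hb).neg).div_const (2 * b)
  rw [integral_Ioi_of_hasDerivAt_of_tendsto' (fun s _ => hderiv s)
    (integrable_mul_exp_neg_mul_sq hb).integrableOn hlim]
  ring

lemma gaussianTail_pos (hb : 0 < b) (x : ℝ) : 0 < gaussianTail b x :=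
  setIntegral_Ioi_pos_of_pos (integrable_exp_neg_mul_sq hb).integrableOn fun _ _ => exp_pos _

lemma two_mul_mul_gaussianTail_lt (hb : 0 < b) (x : ℝ) :
    2 * b * x * gaussianTail b x < exp (-b * x ^ 2) := by
  have hmul := (integrable_mul_exp_neg_mul_sq hb).integrableOn (s := Ioi x)
  have hconst := ((integrable_exp_neg_mul_sq hb).const_mul x).integrableOn (s := Ioi x)
  have hgap : 0 < ∫ s in Ioi x, (s * exp (-b * s ^ 2) - x * exp (-b * s ^ 2)) :=
    setIntegral_Ioi_pos_of_pos (hmul.sub hconst) fun s hs => by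
      rw [← sub_mul]
      exact mul_pos (sub_pos.2 hs) (exp_pos _)
  rw [integral_sub hmul hconst, integral_const_mul, integral_Ioi_mul_exp_neg_mul_sq hb, sub_pos,
    lt_div_iff₀ (by positivity)] at hgap
  unfold gaussianTail
  linarith

lemma hasDerivAt_gaussianTail (hb : 0 < b) (x : ℝ) :
    HasDerivAt (gaussianTail b) (-exp (-b * x ^ 2)) x := by
  have hint := integrable_exp_neg_mul_sq hb
  have heq : gaussianTail b = fun x => gaussianTail b 0 - ∫ s in 0..x, exp (-b * s ^ 2) := by
    ext x
    rw [← intervalIntegral.integral_Ioi_sub_Ioi' hint.integrableOn hint.integrableOn]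
    simp [gaussianTail]
  rw [heq]
  exact (intervalIntegral.integral_hasDerivAt_right hint.intervalIntegrable
    (by fun_prop : Continuous _).aestronglyMeasurable.stronglyMeasurableAtFilter
    (by fun_prop : Continuous _).continuousAt).const_sub _

lemma hasDerivAt_neg_log_gaussianTail (hb : 0 < b) (x : ℝ) :
    HasDerivAt (fun x => -log (gaussianTail b x)) (exp (-b * x ^ 2) / gaussianTail b x) x :=
  ((hasDerivAt_gaussianTail hb x).log (gaussianTail_pos hb x).ne').neg.congr_deriv (by ring)

lemma strictMono_exp_neg_mul_sq_div_gaussianTail (hb : 0 < b) :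
    StrictMono fun x => exp (-b * x ^ 2) / gaussianTail b x := by
  refine strictMono_of_deriv_pos fun x => ?_
  have hT := gaussianTail_pos hb x
  have hderiv : HasDerivAt (fun x => exp (-b * x ^ 2) / gaussianTail b x) _ x :=
    (hasDerivAt_exp_neg_mul_sq b x).div (hasDerivAt_gaussianTail hb x) hT.ne'
  rw [hderiv.deriv]
  refine div_pos ?_ (pow_pos hT 2)
  have hnum : -2 * b * x * exp (-b * x ^ 2) * gaussianTail b x
        - exp (-b * x ^ 2) * -exp (-b * x ^ 2)
      = exp (-b * x ^ 2) * (exp (-b * x ^ 2) - 2 * b * x * gaussianTail b x) := by ring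
  rw [hnum]
  exact mul_pos (exp_pos _) (sub_pos.2 (two_mul_mul_gaussianTail_lt hb x))

lemma strictConvexOn_neg_log_gaussianTail (hb : 0 < b) :
    StrictConvexOn ℝ univ fun x => -log (gaussianTail b x) := by
  have hderiv := hasDerivAt_neg_log_gaussianTail hb
  refine StrictMono.strictConvexOn_univ_of_deriv
    (continuous_iff_continuousAt.2 fun x => (hderiv x).continuousAt) ?_
  rw [funext fun x => (hderiv x).deriv]
  exact strictMono_exp_neg_mul_sq_div_gaussianTail hb

end

lemma gaussianTail_quarter_zero : gaussianTail (1 / 4) 0 = √π := by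
  rw [gaussianTail, integral_gaussian_Ioi, show π / (1 / 4) = 2 ^ 2 * π by ring,
    sqrt_mul (by norm_num), sqrt_sq (by norm_num)]
  ring

lemma one_sub_F_eq (x : ℝ) : 1 - F x = gaussianTail (1 / 4) x / √π := by
  have hint : Integrable fun s : ℝ => exp (-(1 / 4) * s ^ 2) :=
    integrable_exp_neg_mul_sq (by norm_num)
  have hsplit := intervalIntegral.integral_Ioi_sub_Ioi' (hint.integrableOn (s := Ioi 0))
    (hint.integrableOn (s := Ioi x))
  have hexp (s : ℝ) : -s ^ 2 / 4 = -(1 / 4) * s ^ 2 := by ring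
  simp_rw [F, hexp, ← hsplit]
  rw [← gaussianTail, ← gaussianTail, gaussianTail_quarter_zero]
  field_simp
  ring

theorem strictConvexOn_neg_log_one_sub_F :
    StrictConvexOn ℝ Set.univ (fun x : ℝ => -Real.log (1 - F x)) := by
  have heq : (fun x : ℝ => -Real.log (1 - F x))
      = fun x => -log (gaussianTail (1 / 4) x) + log √π := by
    ext x
    rw [one_sub_F_eq, log_div (gaussianTail_pos (by norm_num) x).ne' (sqrt_pos.2 pi_pos).ne']
    ring
  rw [heq]
  exact (strictConvexOn_neg_log_gaussianTail (by norm_num)).add_const _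
end
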